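/- Let G be a finite abelian group (written additively) of order v−1, let H be a subgroup of G of order k−1, and let B₁, …, Bₙ be k-element subsets of G such that the difference sets ΔB₁, …, ΔBₙ are pairwise disjoint, each has cardinality k(k−1), each is disjoint from H, and (H \ {0}) ∪ ΔB₁ ∪ ⋯ ∪ ΔBₙ = G \ {0}. Then on the (v)-element set V = G ∪ {∞} (where ∞ ∉ G), the family of blocks consisting of all sets (H+g) ∪ {∞} for g ∈ G together with all translates Bᵢ + g for i ∈ {1,…,n} and g ∈ G is a Steiner system S(2,k,v): every 2-element subset of V is contained in exactly one of these blocks. -/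

import Mathlib

/-- The set of differences `ΔB = {a - c : a, c ∈ B, a ≠ c}` of a finite subset
of an additively written group. -/
def diffSet {G : Type*} [AddGroup G] [DecidableEq G] (B : Finset G) : Finset G :=
  ((B ×ˢ B).filter fun p => p.1 ≠ p.2).image fun p => p.1 - p.2

/-- A `1`-rotational difference family on a finite abelian group `G` of order `v - 1`,
relative to a subgroup `H` of order `k - 1`, yields a Steiner system `S(2,k,v)` on
`V = G ∪ {∞}` (formalized as `Option G`, with `∞ = none`): the blocks are the sets
`(H + g) ∪ {∞}` for `g ∈ G` together with all translates `Bᵢ + g`, and every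
2-element subset of `V` lies in exactly one block. -/
theorem one_rotational_difference_family_steiner
    {G : Type*} [AddCommGroup G] [Fintype G] [DecidableEq G] {v k n : ℕ}
    (hv : Fintype.card G = v - 1)
    (H : Finset G) (hH : ∃ S : AddSubgroup G, (S : Set G) = (H : Set G))
    (hHcard : H.card = k - 1)
    (B : Fin n → Finset G)
    (hcard : ∀ i, (B i).card = k)
    (hdisj : ∀ i j, i ≠ j → Disjoint (diffSet (B i)) (diffSet (B j)))
    (hΔcard : ∀ i, (diffSet (B i)).card = k * (k - 1))
    (hHdisj : ∀ i, Disjoint (diffSet (B i)) H)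
    (hunion :
      (H \ {0}) ∪ Finset.univ.biUnion (fun i => diffSet (B i)) = Finset.univ \ {0}) :
    ∀ p : Finset (Option G), p.card = 2 →
      ∃! b, b ∈
          ((Finset.univ.image fun g : G =>
              insert (none : Option G) ((H.image (· + g)).image some)) ∪
            (Finset.univ.image fun ig : Fin n × G =>
              ((B ig.1).image (· + ig.2)).image some)) ∧
        p ⊆ b := by
  classical
  obtain ⟨S, hS⟩ := hH
  have hmem : ∀ a : G, a ∈ H ↔ a ∈ S := by
    intro a
    rw [← Finset.mem_coe, ← hS, SetLike.mem_coe]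
  have h0 : (0:G) ∈ H := (hmem 0).2 S.zero_mem
  have hadd : ∀ a b : G, a ∈ H → b ∈ H → a + b ∈ H := fun a b ha hb =>
    (hmem _).2 (add_mem ((hmem _).1 ha) ((hmem _).1 hb))
  have hsub : ∀ a b : G, a ∈ H → b ∈ H → a - b ∈ H := fun a b ha hb =>
    (hmem _).2 (sub_mem ((hmem _).1 ha) ((hmem _).1 hb))
  have hmemT : ∀ (x g : G), x ∈ H.image (· + g) ↔ x - g ∈ H := by
    intro x g
    simp only [Finset.mem_image]
    constructor
    · rintro ⟨h, hh, rfl⟩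
      simpa using hh
    · intro h
      exact ⟨x - g, h, by abel⟩
  have hTeq : ∀ g g' : G, g - g' ∈ H → H.image (· + g) = H.image (· + g') := by
    intro g g' hgg
    ext z
    rw [hmemT, hmemT]
    constructor
    · intro h
      have := hadd _ _ h hgg
      rwa [show z - g + (g - g') = z - g' by abel] at this
    · intro h
      have := hsub _ _ h hgg
      rwa [show z - g' - (g - g') = z - g by abel] at this
  have hmemD : ∀ (s : Finset G) (d : G),
      d ∈ diffSet s ↔ ∃ a ∈ s, ∃ c ∈ s, a ≠ c ∧ a - c = d := by
    intro s d
    simp only [diffSet, Finset.mem_image, Finset.mem_filter, Finset.mem_product, Prod.exists]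
    constructor
    · rintro ⟨a, c, ⟨⟨ha, hc⟩, hne⟩, rfl⟩
      exact ⟨a, ha, c, hc, hne, rfl⟩
    · rintro ⟨a, ha, c, hc, hne, rfl⟩
      exact ⟨a, c, ⟨⟨ha, hc⟩, hne⟩, rfl⟩
  have hinj : ∀ i : Fin n, ∀ a c a' c' : G, a ∈ B i → c ∈ B i → a' ∈ B i → c' ∈ B i →
      a ≠ c → a' ≠ c' → a - c = a' - c' → a = a' ∧ c = c' := by
    intro i a c a' c' ha hc ha' hc' hac ha'c' heq
    have hoff : diffSet (B i) = (B i).offDiag.image fun p => p.1 - p.2 := by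
      unfold diffSet; congr 1; ext p; simp [Finset.mem_offDiag, and_assoc]
    have hc1 : ((B i).offDiag.image fun p => p.1 - p.2).card = (B i).offDiag.card := by
      rw [← hoff, hΔcard i, Finset.offDiag_card, hcard i]
      cases k with
      | zero => rfl
      | succ m => rw [Nat.succ_sub_one, Nat.mul_succ, Nat.add_sub_cancel]
    have hio : Set.InjOn (fun p : G × G => p.1 - p.2) ((B i).offDiag : Set (G × G)) :=
      Finset.card_image_iff.mp hc1
    have h1 : (a, c) ∈ ((B i).offDiag : Set (G × G)) := by
      simp only [Finset.mem_coe, Finset.mem_offDiag]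
      exact ⟨ha, hc, hac⟩
    have h2 : (a', c') ∈ ((B i).offDiag : Set (G × G)) := by
      simp only [Finset.mem_coe, Finset.mem_offDiag]
      exact ⟨ha', hc', ha'c'⟩
    have heq2 := hio h1 h2 heq
    exact ⟨congrArg Prod.fst heq2, congrArg Prod.snd heq2⟩
  have memSome : ∀ (T : Finset G) (x : G),
      (some x ∈ insert (none : Option G) (T.image some)) ↔ x ∈ T := by
    intro T x; simp
  set BlkA := (Finset.univ.image fun g : G =>
      insert (none : Option G) ((H.image (· + g)).image some)) with hBlkA
  set BlkB := (Finset.univ.image fun ig : Fin n × G =>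
      ((B ig.1).image (· + ig.2)).image some) with hBlkB
  have claim1 : ∀ x : G, ∃! b, (b ∈ BlkA ∪ BlkB) ∧
      ({none, some x} : Finset (Option G)) ⊆ b := by
    intro x
    refine ⟨insert none ((H.image (· + x)).image some), ⟨?_, ?_⟩, ?_⟩
    · exact Finset.mem_union_left _ (Finset.mem_image.mpr ⟨x, Finset.mem_univ x, rfl⟩)
    · intro z hz
      simp only [Finset.mem_insert, Finset.mem_singleton] at hz
      rcases hz with rfl | rfl
      · exact Finset.mem_insert_self _ _
      · refine Finset.mem_insert_of_mem (Finset.mem_image_of_mem _ ?_)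
        rw [hmemT]
        simpa using h0
    · rintro b ⟨hb, hsubp⟩
      have hnone : none ∈ b := hsubp (Finset.mem_insert_self _ _)
      have hx : some x ∈ b := hsubp (by simp)
      rcases Finset.mem_union.mp hb with hb | hb
      · obtain ⟨g, -, rfl⟩ := Finset.mem_image.mp hb
        have hxg : x - g ∈ H := (hmemT x g).mp ((memSome _ _).mp hx)
        have hgx : g - x ∈ H := by
          have := hsub _ _ h0 hxg
          rwa [show (0:G) - (x - g) = g - x by abel] at this
        rw [hTeq g x hgx]
      · obtain ⟨⟨i, g⟩, -, rfl⟩ := Finset.mem_image.mp hb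
        exact absurd hnone (by simp)
  have claim2 : ∀ x y : G, x ≠ y → ∃! b, (b ∈ BlkA ∪ BlkB) ∧
      ({some x, some y} : Finset (Option G)) ⊆ b := by
    intro x y hxy
    by_cases hd : x - y ∈ H
    · refine ⟨insert none ((H.image (· + y)).image some), ⟨?_, ?_⟩, ?_⟩
      · exact Finset.mem_union_left _ (Finset.mem_image.mpr ⟨y, Finset.mem_univ y, rfl⟩)
      · intro z hz
        simp only [Finset.mem_insert, Finset.mem_singleton] at hz
        rcases hz with rfl | rfl
        · exact Finset.mem_insert_of_mem (Finset.mem_image_of_mem _ ((hmemT x y).mpr hd))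
        · refine Finset.mem_insert_of_mem (Finset.mem_image_of_mem _ ((hmemT y y).mpr ?_))
          simpa using h0
      · rintro b ⟨hb, hsubp⟩
        have hx : some x ∈ b := hsubp (by simp)
        have hy : some y ∈ b := hsubp (by simp)
        rcases Finset.mem_union.mp hb with hb | hb
        · obtain ⟨g, -, rfl⟩ := Finset.mem_image.mp hb
          have hyg : y - g ∈ H := (hmemT y g).mp ((memSome _ _).mp hy)
          have hgy : g - y ∈ H := by
            have := hsub _ _ h0 hyg
            rwa [show (0:G) - (y - g) = g - y by abel] at this
          rw [hTeq g y hgy]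
        · exfalso
          obtain ⟨⟨i, g⟩, -, rfl⟩ := Finset.mem_image.mp hb
          simp only [Finset.mem_image] at hx hy
          obtain ⟨a, ⟨a0, ha0, rfl⟩, hax⟩ := hx
          obtain ⟨c, ⟨c0, hc0, rfl⟩, hcy⟩ := hy
          replace hax : a0 + g = x := Option.some_injective _ hax
          replace hcy : c0 + g = y := Option.some_injective _ hcy
          have hne : a0 ≠ c0 := by
            rintro rfl
            exact hxy (hax ▸ hcy ▸ rfl)
          have hdiff : a0 - c0 = x - y := by rw [← hax, ← hcy]; abel
          have hmem3 : x - y ∈ diffSet (B i) := (hmemD _ _).mpr ⟨a0, ha0, c0, hc0, hne, hdiff⟩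
          exact Finset.disjoint_left.mp (hHdisj i) hmem3 hd
    · have hd0 : x - y ≠ 0 := sub_ne_zero.mpr hxy
      have hmem2 : x - y ∈ Finset.univ \ ({0} : Finset G) := by simp [hd0]
      rw [← hunion] at hmem2
      rcases Finset.mem_union.mp hmem2 with h | h
      · exact absurd (Finset.mem_sdiff.mp h).1 hd
      obtain ⟨i, -, hdi⟩ := Finset.mem_biUnion.mp h
      obtain ⟨a, ha, c, hc, hac, hdac⟩ := (hmemD _ _).mp hdi
      refine ⟨((B i).image (· + (x - a))).image some, ⟨?_, ?_⟩, ?_⟩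
      · exact Finset.mem_union_right _ (Finset.mem_image.mpr ⟨(i, x - a), Finset.mem_univ _, rfl⟩)
      · intro z hz
        simp only [Finset.mem_insert, Finset.mem_singleton] at hz
        rcases hz with rfl | rfl
        · exact Finset.mem_image_of_mem _ (Finset.mem_image.mpr ⟨a, ha, by abel⟩)
        · refine Finset.mem_image_of_mem _ (Finset.mem_image.mpr ⟨c, hc, ?_⟩)
          have h1 : c + (x - a) = x - (a - c) := by abel
          rw [h1, hdac]
          abel
      · rintro b ⟨hb, hsubp⟩
        have hx : some x ∈ b := hsubp (by simp)
        have hy : some y ∈ b := hsubp (by simp)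
        rcases Finset.mem_union.mp hb with hb | hb
        · exfalso
          obtain ⟨g, -, rfl⟩ := Finset.mem_image.mp hb
          have h1 : x - g ∈ H := (hmemT x g).mp ((memSome _ _).mp hx)
          have h2 : y - g ∈ H := (hmemT y g).mp ((memSome _ _).mp hy)
          have h3 := hsub _ _ h1 h2
          rw [show x - g - (y - g) = x - y by abel] at h3
          exact hd h3
        · obtain ⟨⟨j, g⟩, -, rfl⟩ := Finset.mem_image.mp hb
          simp only [Finset.mem_image] at hx hy
          obtain ⟨a1, ⟨a', ha', rfl⟩, hax⟩ := hx
          obtain ⟨c1, ⟨c', hc', rfl⟩, hcy⟩ := hy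
          replace hax : a' + g = x := Option.some_injective _ hax
          replace hcy : c' + g = y := Option.some_injective _ hcy
          have ha'c' : a' ≠ c' := by
            rintro rfl
            exact hxy (hax ▸ hcy ▸ rfl)
          have hdiff : a' - c' = x - y := by rw [← hax, ← hcy]; abel
          have hji : j = i := by
            by_contra hne
            have h1 : x - y ∈ diffSet (B j) := (hmemD _ _).mpr ⟨a', ha', c', hc', ha'c', hdiff⟩
            exact Finset.disjoint_left.mp (hdisj j i hne) h1 hdi
          subst hji
          obtain ⟨hoa, -⟩ := hinj j a' c' a c ha' hc' ha hc ha'c' hac (by rw [hdiff, hdac])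
          have hg : g = x - a := by rw [← hoa, ← hax]; abel
          rw [hg]
  intro p hp
  obtain ⟨u, w, huw, rfl⟩ := Finset.card_eq_two.mp hp
  match u, w with
  | none, none => exact absurd rfl huw
  | none, some x => exact claim1 x
  | some x, none =>
    rw [Finset.pair_comm]
    exact claim1 x
  | some x, some y => exact claim2 x y (by simpa using huw)
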